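/- Let Ω ∈ 𝒮² be weakly convex, i.e. Ω is a convex subset of ℝ². Let (m₁,m₂) ∈ (ℤ_{≥0})² \ {(0,0)}, and let c : [0,1] → Ū_Ω be a continuous path with c(0) = (ρ_Ω(0), 0) and c(1) = (0, ρ_Ω(π/2)). Then max_{t ∈ [0,1]} A_{m₁,m₂}(c(t)) ≥ max_{p ∈ Ω} A_{m₁,m₂}(p). -/
import Mathlib


open Set Real

noncomputable section

/-- Points of the plane `ℝ²`. -/
abbrev Pt : Type := ℝ × ℝ

/-- The unit quarter circle `Σ² = {v ∈ (ℝ_{≥0})² : |v| = 1}`. -/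
def Sigma2 : Set Pt := {v | 0 ≤ v.1 ∧ 0 ≤ v.2 ∧ v.1 ^ 2 + v.2 ^ 2 = 1}

/-- `Ω ∈ 𝒮²`, witnessed by the radial function `r` (a positive function on `Σ²`,
smooth in the sense that it is `C^∞` on `Σ²` as a subset of `ℝ²`). -/
def IsToricBase (Ω : Set Pt) (r : Pt → ℝ) : Prop :=
  ContDiffOn ℝ (⊤ : ℕ∞) r Sigma2 ∧ (∀ z ∈ Sigma2, 0 < r z) ∧
    Ω = {p | ∃ z ∈ Sigma2, ∃ t : ℝ, 0 ≤ t ∧ t ≤ r z ∧ p = t • z}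

/-- The open positive quadrant `(ℝ_{>0})²`. -/
def posQuad : Set Pt := {p | 0 < p.1 ∧ 0 < p.2}

/-- The closed nonnegative quadrant `(ℝ_{≥0})²`. -/
def nonnegQuad : Set Pt := {p | 0 ≤ p.1 ∧ 0 ≤ p.2}

/-- `U_Ω := (ℝ_{>0})² \ Ω`. -/
def UStar (Ω : Set Pt) : Set Pt := posQuad \ Ω

/-- `Ū_Ω`, the closure of `U_Ω` in `(ℝ_{≥0})²`. -/
def UBar (Ω : Set Pt) : Set Pt := closure (UStar Ω) ∩ nonnegQuad

/-- `A_{m₁,m₂}(y₁,y₂) = m₁ y₁ + m₂ y₂`. -/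
def Afun (m₁ m₂ : ℤ) (p : Pt) : ℝ := m₁ * p.1 + m₂ * p.2

/-- The curve `γ(θ) = ρ_Ω(θ)·(cos θ, sin θ)` parametrizing `∂Ω`. -/
def gammaCurve (r : Pt → ℝ) (θ : ℝ) : Pt :=
  r (Real.cos θ, Real.sin θ) • ((Real.cos θ, Real.sin θ) : Pt)

/-- `∂Ω := {ρ_Ω(θ)·(cos θ, sin θ) : θ ∈ [0,π/2]}`. -/
def bdryOmega (r : Pt → ℝ) : Set Pt := gammaCurve r '' Icc 0 (π / 2)

/-- `∂₊Ω := ∂Ω ∪ {(t,0) : t ≥ ρ_Ω(0)} ∪ {(0,t) : t ≥ ρ_Ω(π/2)}`. -/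
def bdryPlusOmega (r : Pt → ℝ) : Set Pt :=
  bdryOmega r ∪ {p | p.2 = 0 ∧ r (1, 0) ≤ p.1} ∪ {p | p.1 = 0 ∧ r (0, 1) ≤ p.2}

/-- The action spectrum `spec(Ω)`. -/
def spec (r : Pt → ℝ) : Set ℝ :=
  {x | ∃ m : ℤ, 1 ≤ m ∧ x = m * r (1, 0)} ∪
  {x | ∃ m : ℤ, 1 ≤ m ∧ x = m * r (0, 1)} ∪
  {x | ∃ m₁ m₂ : ℤ, ¬(m₁ ≤ 0 ∧ m₂ ≤ 0) ∧ ∃ θ ∈ Icc (0 : ℝ) (π / 2),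
    deriv (fun t => Afun m₁ m₂ (gammaCurve r t)) θ = 0 ∧
    0 < Afun m₁ m₂ (gammaCurve r θ) ∧ x = Afun m₁ m₂ (gammaCurve r θ)}
def nrm (p : Pt) : ℝ := Real.sqrt (p.1 ^ 2 + p.2 ^ 2)

lemma nrm_continuous : Continuous nrm := by
  unfold nrm; fun_prop

lemma nrm_nonneg' (p : Pt) : 0 ≤ nrm p := Real.sqrt_nonneg _

lemma nrm_pos' {p : Pt} (h : p ≠ 0) : 0 < nrm p := by
  have h' : p.1 ≠ 0 ∨ p.2 ≠ 0 := by
    by_contra hc; push_neg at hc; exact h (Prod.ext hc.1 hc.2)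
  apply Real.sqrt_pos.2
  rcases h' with h' | h' <;> positivity

lemma nrm_sq (p : Pt) : nrm p ^ 2 = p.1 ^ 2 + p.2 ^ 2 := Real.sq_sqrt (by positivity)

lemma unit_mem_sigma2 {p : Pt} (hp1 : 0 ≤ p.1) (hp2 : 0 ≤ p.2) (hne : p ≠ 0) :
    (nrm p)⁻¹ • p ∈ Sigma2 := by
  have hn := nrm_pos' hne
  have hsq := nrm_sq p
  refine ⟨?_, ?_, ?_⟩
  · simp only [Prod.smul_fst, smul_eq_mul]; positivity
  · simp only [Prod.smul_snd, smul_eq_mul]; positivity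
  · simp only [Prod.smul_fst, Prod.smul_snd, smul_eq_mul]
    field_simp
    linarith

lemma sigma2_isCompact : IsCompact Sigma2 := by
  apply Metric.isCompact_of_isClosed_isBounded
  · have h : Sigma2 = (fun v : Pt => v.1) ⁻¹' Ici 0 ∩
        ((fun v : Pt => v.2) ⁻¹' Ici 0 ∩ (fun v : Pt => v.1 ^ 2 + v.2 ^ 2) ⁻¹' {1}) := by
      ext v; simp [Sigma2, and_assoc]
    rw [h]
    exact (isClosed_Ici.preimage continuous_fst).inter
      ((isClosed_Ici.preimage continuous_snd).inter
        (isClosed_singleton.preimage (by fun_prop)))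
  · apply Bornology.IsBounded.subset (Metric.isBounded_closedBall (x := (0 : Pt)) (r := 1))
    rintro v ⟨h1, h2, h3⟩
    rw [Metric.mem_closedBall, Prod.dist_eq]
    apply max_le <;> rw [Real.dist_eq] <;>
      simp only [Prod.fst_zero, Prod.snd_zero, sub_zero] <;>
      rw [abs_le] <;> constructor <;> nlinarith

lemma mem_omega_of (r : Pt → ℝ) {p : Pt} (hp1 : 0 ≤ p.1) (hp2 : 0 ≤ p.2) (hne : p ≠ 0)
    (h : nrm p ≤ r ((nrm p)⁻¹ • p)) :
    p ∈ {q : Pt | ∃ z ∈ Sigma2, ∃ t : ℝ, 0 ≤ t ∧ t ≤ r z ∧ q = t • z} := by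
  have hn := nrm_pos' hne
  exact ⟨(nrm p)⁻¹ • p, unit_mem_sigma2 hp1 hp2 hne, nrm p, nrm_nonneg' p, h,
    by rw [smul_smul, mul_inv_cancel₀ (ne_of_gt hn), one_smul]⟩


lemma posQuad_ne_zero {p : Pt} (hp : 0 < p.1) : p ≠ 0 := by
  intro h
  rw [h] at hp
  simp at hp


/-- if `Ω ∈ 𝒮²` is weakly convex, `(m₁,m₂) ∈ (ℤ_{≥0})² \ {(0,0)}` and
`c : [0,1] → Ū_Ω` is a continuous path from `(ρ_Ω(0),0)` to `(0,ρ_Ω(π/2))`, then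
`max_{t ∈ [0,1]} A_{m₁,m₂}(c(t)) ≥ max_{p ∈ Ω} A_{m₁,m₂}(p)`. -/
theorem stmt9 (Ω : Set Pt) (r : Pt → ℝ) (hΩ : IsToricBase Ω r) (hconv : Convex ℝ Ω)
    (m₁ m₂ : ℤ) (hm₁ : 0 ≤ m₁) (hm₂ : 0 ≤ m₂) (hm : ¬(m₁ = 0 ∧ m₂ = 0))
    (c : ℝ → Pt) (hcont : ContinuousOn c (Icc 0 1))
    (hmem : ∀ t ∈ Icc (0 : ℝ) 1, c t ∈ UBar Ω)
    (h0 : c 0 = ((r (1, 0), 0) : Pt)) (h1 : c 1 = ((0, r (0, 1)) : Pt)) :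
    ∃ t ∈ Icc (0 : ℝ) 1, ∀ p ∈ Ω, Afun m₁ m₂ p ≤ Afun m₁ m₂ (c t) := by
  obtain ⟨hr_sm, hr_pos, hΩeq⟩ := hΩ
  have hr_cont : ContinuousOn r Sigma2 := hr_sm.continuousOn
  have h10 : ((1, 0) : Pt) ∈ Sigma2 := by constructor <;> norm_num [Sigma2]
  have h01 : ((0, 1) : Pt) ∈ Sigma2 := by constructor <;> norm_num [Sigma2]
  obtain ⟨z₀, hz₀, hminr⟩ := sigma2_isCompact.exists_isMinOn ⟨(1, 0), h10⟩ hr_cont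
  set ε := r z₀ with hε
  have hεpos : 0 < ε := hr_pos z₀ hz₀
  have hεle : ∀ z ∈ Sigma2, ε ≤ r z := fun z hz => hminr hz
  have hsmall : ∀ p : Pt, 0 ≤ p.1 → 0 ≤ p.2 → p ≠ 0 → nrm p < ε → p ∈ Ω := by
    intro p hp1 hp2 hne hlt
    rw [hΩeq]
    exact mem_omega_of r hp1 hp2 hne
      (le_of_lt (lt_of_lt_of_le hlt (hεle _ (unit_mem_sigma2 hp1 hp2 hne))))
  have hub : closure (UStar Ω) ⊆ {p : Pt | ε ≤ nrm p} := by
    apply closure_minimal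
    · rintro p ⟨⟨hp1, hp2⟩, hpΩ⟩
      simp only [Set.mem_setOf_eq]
      by_contra hlt
      push_neg at hlt
      exact hpΩ (hsmall p hp1.le hp2.le (posQuad_ne_zero hp1) hlt)
    · exact isClosed_le continuous_const nrm_continuous
  have hA_cont : ContinuousOn (fun t => Afun m₁ m₂ (c t)) (Icc 0 1) := by
    have hA : Continuous (Afun m₁ m₂) := by unfold Afun; fun_prop
    exact hA.comp_continuousOn hcont
  obtain ⟨ts, hts, htsmax⟩ := isCompact_Icc.exists_isMaxOn (nonempty_Icc.mpr zero_le_one) hA_cont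
  refine ⟨ts, hts, ?_⟩
  intro p hp
  rw [hΩeq] at hp
  obtain ⟨z, ⟨hz1, hz2, hz3⟩, t, ht0, htr, rfl⟩ := hp
  have hm₁' : (0:ℝ) ≤ (m₁ : ℝ) := by exact_mod_cast hm₁
  have hm₂' : (0:ℝ) ≤ (m₂ : ℝ) := by exact_mod_cast hm₂
  have hAz : (0 : ℝ) ≤ m₁ * z.1 + m₂ * z.2 :=
    add_nonneg (mul_nonneg hm₁' hz1) (mul_nonneg hm₂' hz2)
  have hAsmul : ∀ (s : ℝ) (q : Pt), Afun m₁ m₂ (s • q) = s * (m₁ * q.1 + m₂ * q.2) := by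
    intro s q
    simp only [Afun, Prod.smul_fst, Prod.smul_snd, smul_eq_mul]; ring
  rw [hAsmul]
  have hkey : r z * (m₁ * z.1 + m₂ * z.2) ≤ Afun m₁ m₂ (c ts) := by
    rcases eq_or_lt_of_le hz1 with hx1 | hx1
    · -- z = (0,1)
      have hz21 : z.2 = 1 := by nlinarith
      have hzeq : z = ((0, 1) : Pt) := Prod.ext hx1.symm hz21
      have hle := htsmax (right_mem_Icc.mpr zero_le_one)
      simp only [Set.mem_setOf_eq] at hle
      calc r z * (m₁ * z.1 + m₂ * z.2) = Afun m₁ m₂ (c 1) := by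
            rw [hzeq, h1]; simp [Afun, mul_comm]
        _ ≤ Afun m₁ m₂ (c ts) := hle
    rcases eq_or_lt_of_le hz2 with hx2 | hx2
    · -- z = (1,0)
      have hz11 : z.1 = 1 := by nlinarith
      have hzeq : z = ((1, 0) : Pt) := Prod.ext hz11 hx2.symm
      have hle := htsmax (left_mem_Icc.mpr zero_le_one)
      simp only [Set.mem_setOf_eq] at hle
      calc r z * (m₁ * z.1 + m₂ * z.2) = Afun m₁ m₂ (c 0) := by
            rw [hzeq, h0]; simp [Afun]; ring
        _ ≤ Afun m₁ m₂ (c ts) := hle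
    -- main case: both coordinates of z positive
    · set g : ℝ → ℝ := fun t => z.2 * (c t).1 - z.1 * (c t).2 with hg
      have hg_cont : ContinuousOn g (Icc 0 1) :=
        (continuousOn_const.mul hcont.fst).sub (continuousOn_const.mul hcont.snd)
      have hg0 : 0 < g 0 := by
        have hrp := hr_pos _ h10
        have : g 0 = z.2 * r (1, 0) := by simp [hg, h0]
        rw [this]
        exact mul_pos hx2 hrp
      have hg1 : g 1 < 0 := by
        have hrp := hr_pos _ h01
        have : g 1 = -(z.1 * r (0, 1)) := by simp [hg, h1]
        rw [this]
        exact neg_neg_iff_pos.mpr (mul_pos hx1 hrp)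
      obtain ⟨t₀, ht₀, hgt₀⟩ := intermediate_value_Icc' zero_le_one hg_cont ⟨hg1.le, hg0.le⟩
      set q := c t₀ with hqdef
      obtain ⟨hqcl, hq1, hq2⟩ := hmem t₀ ht₀
      have hcross : z.2 * q.1 = z.1 * q.2 := by
        have h' : z.2 * q.1 - z.1 * q.2 = 0 := hgt₀
        linarith
      set u := q.1 * z.1 + q.2 * z.2 with hu
      have hqe1 : q.1 = u * z.1 := by
        rw [hu]; linear_combination (-q.1) * hz3 + z.2 * hcross
      have hqe2 : q.2 = u * z.2 := by
        rw [hu]; linear_combination (-q.2) * hz3 + (-z.1) * hcross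
      have hu0 : 0 ≤ u := add_nonneg (mul_nonneg hq1 hz1) (mul_nonneg hq2 hz2)
      have hnq : nrm q = u := by
        have h' : q.1 ^ 2 + q.2 ^ 2 = u ^ 2 := by
          rw [hqe1, hqe2]; linear_combination u ^ 2 * hz3
        show Real.sqrt _ = u
        rw [h', Real.sqrt_sq hu0]
      have hεu : ε ≤ u := by rw [← hnq]; exact hub hqcl
      have hupos : 0 < u := lt_of_lt_of_le hεpos hεu
      have hqz : (nrm q)⁻¹ • q = z := by
        rw [hnq]
        apply Prod.ext <;> simp only [Prod.smul_fst, Prod.smul_snd, smul_eq_mul]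
        · rw [hqe1]; field_simp
        · rw [hqe2]; field_simp
      have hzSig : z ∈ Sigma2 := ⟨hz1, hz2, hz3⟩
      have hru : r z ≤ u := by
        by_contra hlt
        push_neg at hlt
        set F : Pt → ℝ := fun p => r ((nrm p)⁻¹ • p) - nrm p with hF
        have hFq : 0 < F q := by
          simp only [hF]; rw [hqz, hnq]; linarith
        have hnrmq : nrm q ≠ 0 := by rw [hnq]; exact ne_of_gt hupos
        have hunit_cont : ContinuousWithinAt (fun p : Pt => (nrm p)⁻¹ • p) posQuad q :=
          ((nrm_continuous.continuousAt.inv₀ hnrmq).smul continuousAt_id).continuousWithinAt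
        have hmapsto : MapsTo (fun p : Pt => (nrm p)⁻¹ • p) posQuad Sigma2 := by
          rintro p ⟨hp1, hp2⟩
          exact unit_mem_sigma2 hp1.le hp2.le (posQuad_ne_zero hp1)
        have hrz_cont : ContinuousWithinAt r Sigma2 ((nrm q)⁻¹ • q) := by
          rw [hqz]; exact hr_cont z hzSig
        have hcomp : ContinuousWithinAt (fun p : Pt => r ((nrm p)⁻¹ • p)) posQuad q :=
          ContinuousWithinAt.comp (g := r) (f := fun p : Pt => (nrm p)⁻¹ • p)
            hrz_cont hunit_cont hmapsto
        have hF_cont : ContinuousWithinAt F posQuad q :=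
          hcomp.sub nrm_continuous.continuousWithinAt
        have hev : ∀ᶠ p in nhdsWithin q posQuad, 0 < F p :=
          hF_cont.eventually (eventually_gt_nhds hFq)
        rw [eventually_nhdsWithin_iff] at hev
        obtain ⟨p, hpF, hpU⟩ := mem_closure_iff_nhds.mp hqcl _ hev
        obtain ⟨hpQ, hpΩ⟩ := hpU
        have hpFp : 0 < F p := hpF hpQ
        apply hpΩ
        rw [hΩeq]
        exact mem_omega_of r hpQ.1.le hpQ.2.le (posQuad_ne_zero hpQ.1)
          (by simp only [hF] at hpFp; linarith)
      have hle := htsmax ht₀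
      simp only [Set.mem_setOf_eq] at hle
      calc r z * (m₁ * z.1 + m₂ * z.2) ≤ u * (m₁ * z.1 + m₂ * z.2) :=
            mul_le_mul_of_nonneg_right hru hAz
        _ = Afun m₁ m₂ q := by simp only [Afun]; rw [hqe1, hqe2]; ring
        _ ≤ Afun m₁ m₂ (c ts) := hle
  calc t * (m₁ * z.1 + m₂ * z.2) ≤ r z * (m₁ * z.1 + m₂ * z.2) :=
        mul_le_mul_of_nonneg_right htr hAz
    _ ≤ Afun m₁ m₂ (c ts) := hkey

end
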